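/- arXiv:1402.0843 — 2 statements merged into one kernel-verified Lean document; each statement's English description precedes it below -/
import Mathlib

section
/- Let Γ_k⁺ = {κ ∈ ℝ^m : e_l(κ) > 0 for all 1 ≤ l ≤ k} be the Garding cone. If κ ∈ ℝ^m satisfies e_k(κ) > 0 and κ lies in the connected component of {κ : e_k(κ) > 0} containing the point (1,1,…,1), then e_l(κ) > 0 for all 1 ≤ l ≤ k. -/
/-!
The coefficients of `P_κ(t) = ∏ i, (1 + κ i t)` are the `e_l(κ)`. `P_κ` and all its derivatives are
real-rooted, and a real-rooted `p` satisfies `p p'' ≤ p'²` (the inequality is multiplicative and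
holds for linear factors); at `t = 0` this is Newton's inequality `e_l e_{l+2} ≤ e_{l+1}²`.

Now let `e_1, …, e_k ≥ 0` and `e_k > 0` at `κ`. If some `κ i ≤ 0`, let `w` be `κ` without that
coordinate, so `e_{j+1}(κ) = e_{j+1}(w) + κ i e_j(w)`. Then `e_j(w) ≥ 0` for `j ≤ k` and
`e_k(w) ≥ e_k(κ) > 0`, so by induction on `m` all `e_j(w) > 0`; by Newton the ratios
`e_j(w) / e_{j+1}(w)` increase with `j`, so positivity of `e_k(κ)` propagates to every
`e_{j+1}(κ)`. Hence `Γ_k⁺` is open and closed in `{e_k > 0}`, so it contains the connected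
component of `(1, …, 1)`.
-/

open Polynomial

/-- The `j`-th elementary symmetric polynomial of `κ₁, …, κ_m`. -/
def esymmF (m j : ℕ) (κ : Fin m → ℝ) : ℝ :=
  ∑ s ∈ Finset.powersetCard j Finset.univ, ∏ i ∈ s, κ i

namespace Polynomial

theorem eval_mul_eval_derivative_derivative_le_sq_mul {f g : ℝ[X]} {x : ℝ}
    (hf : f.eval x * (derivative (derivative f)).eval x ≤ (derivative f).eval x ^ 2)
    (hg : g.eval x * (derivative (derivative g)).eval x ≤ (derivative g).eval x ^ 2) :
    (f * g).eval x * (derivative (derivative (f * g))).eval x ≤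
      (derivative (f * g)).eval x ^ 2 := by
  simp only [derivative_mul, derivative_add, eval_mul, eval_add]
  nlinarith [mul_le_mul_of_nonneg_left hf (sq_nonneg (g.eval x)),
    mul_le_mul_of_nonneg_left hg (sq_nonneg (f.eval x))]

theorem Splits.eval_mul_eval_derivative_derivative_le_sq {p : ℝ[X]} (hp : p.Splits) (x : ℝ) :
    p.eval x * (derivative (derivative p)).eval x ≤ (derivative p).eval x ^ 2 := by
  induction hp using Submonoid.closure_induction with
  | mem f hf =>
    obtain ⟨a, rfl⟩ | ⟨a, rfl⟩ := hf <;> simp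
  | one => simp
  | mul f g _ _ hf hg => exact eval_mul_eval_derivative_derivative_le_sq_mul hf hg

theorem Splits.derivative {p : ℝ[X]} (hp : p.Splits) : p.derivative.Splits := by
  rw [splits_iff_card_roots] at hp ⊢
  have := card_roots_le_derivative p
  have := card_roots' p.derivative
  have := natDegree_derivative_le p
  omega

theorem Splits.iterate_derivative {p : ℝ[X]} (hp : p.Splits) (n : ℕ) :
    (Polynomial.derivative^[n] p).Splits := by
  induction n with
  | zero => exact hp
  | succ n ih => rw [Function.iterate_succ_apply']; exact ih.derivative

theorem eval_zero_iterate_derivative {R : Type*} [CommSemiring R] (p : R[X]) (n : ℕ) :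
    (derivative^[n] p).eval 0 = n.factorial * p.coeff n := by
  rw [← coeff_zero_eq_eval_zero, coeff_iterate_derivative, zero_add, Nat.descFactorial_self,
    nsmul_eq_mul]

theorem Splits.coeff_mul_coeff_le_sq {p : ℝ[X]} (hp : p.Splits) (l : ℕ) :
    p.coeff l * p.coeff (l + 2) ≤ p.coeff (l + 1) ^ 2 := by
  have h := (hp.iterate_derivative l).eval_mul_eval_derivative_derivative_le_sq 0
  rw [← Function.iterate_succ_apply' Polynomial.derivative,
    ← Function.iterate_succ_apply' Polynomial.derivative,
    eval_zero_iterate_derivative, eval_zero_iterate_derivative, eval_zero_iterate_derivative,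
    Nat.factorial_succ (l + 1), Nat.factorial_succ l] at h
  push_cast at h
  have hfac : (0 : ℝ) < (l + 1) * l.factorial ^ 2 := by positivity
  have newton : (l + 2 : ℝ) * (p.coeff l * p.coeff (l + 2)) ≤ (l + 1) * p.coeff (l + 1) ^ 2 := by
    refine le_of_mul_le_mul_left ?_ hfac
    linear_combination h
  rcases le_or_gt (p.coeff l * p.coeff (l + 2)) 0 with hneg | hpos
  · exact hneg.trans (sq_nonneg _)
  · nlinarith

end Polynomial

theorem mul_le_mul_of_mul_le_sq {a : ℕ → ℝ} {n : ℕ} (hpos : ∀ i ≤ n, 0 < a i)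
    (hlc : ∀ i, i + 2 ≤ n → a i * a (i + 2) ≤ a (i + 1) ^ 2) {i j : ℕ} (hij : i ≤ j)
    (hjn : j < n) : a i * a (j + 1) ≤ a (i + 1) * a j := by
  induction j, hij using Nat.le_induction with
  | base => rw [mul_comm]
  | succ j hij ih =>
    have hj := hpos (j + 1) hjn.le
    refine le_of_mul_le_mul_left ?_ hj
    calc a (j + 1) * (a i * a (j + 2)) = a i * a (j + 1) * a (j + 2) := by ring
      _ ≤ a (i + 1) * a j * a (j + 2) :=
        mul_le_mul_of_nonneg_right (ih (by omega)) (hpos (j + 2) hjn).le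
      _ ≤ a (i + 1) * a (j + 1) ^ 2 := by
        rw [mul_assoc]
        exact mul_le_mul_of_nonneg_left (hlc j hjn) (hpos (i + 1) (by omega)).le
      _ = a (j + 1) * (a (i + 1) * a (j + 1)) := by ring

theorem add_mul_pos_of_mul_le_sq {a : ℕ → ℝ} {c : ℝ} {n : ℕ} (hpos : ∀ i ≤ n + 1, 0 < a i)
    (hlc : ∀ i, i + 2 ≤ n + 1 → a i * a (i + 2) ≤ a (i + 1) ^ 2) (hc : c ≤ 0)
    (hn : 0 < a (n + 1) + c * a n) {j : ℕ} (hj : j ≤ n) : 0 < a (j + 1) + c * a j := by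
  have hratio := mul_le_mul_of_mul_le_sq hpos hlc hj (Nat.lt_succ_self n)
  have hj1 := hpos (j + 1) (by omega)
  have hn1 := hpos (n + 1) le_rfl
  refine pos_of_mul_pos_right (a := a (n + 1)) ?_ hn1.le
  nlinarith [mul_pos hj1 hn]

noncomputable def esymmGenPoly (m : ℕ) (κ : Fin m → ℝ) : ℝ[X] :=
  ∏ i, (C (κ i) * X + 1)

theorem coeff_esymmGenPoly (m : ℕ) (κ : Fin m → ℝ) (j : ℕ) :
    (esymmGenPoly m κ).coeff j = esymmF m j κ := by
  classical
  rw [esymmGenPoly, Finset.prod_add, esymmF, finsetSum_coeff,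
    Finset.powersetCard_eq_filter, Finset.sum_filter]
  refine Finset.sum_congr rfl fun s _ => ?_
  rw [Finset.prod_const_one, mul_one, Finset.prod_mul_distrib, Finset.prod_const,
    ← map_prod C κ s, coeff_C_mul, coeff_X_pow]
  simp [eq_comm, mul_ite]

theorem splits_esymmGenPoly (m : ℕ) (κ : Fin m → ℝ) : (esymmGenPoly m κ).Splits :=
  Splits.prod fun _ _ => Splits.of_degree_le_one <| (degree_add_le _ _).trans <|
    max_le (degree_C_mul_X_le _) (degree_one_le.trans zero_le_one)

theorem esymmF_mul_esymmF_le_sq (m l : ℕ) (κ : Fin m → ℝ) :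
    esymmF m l κ * esymmF m (l + 2) κ ≤ esymmF m (l + 1) κ ^ 2 := by
  simpa only [coeff_esymmGenPoly] using (splits_esymmGenPoly m κ).coeff_mul_coeff_le_sq l

theorem esymmF_succ_eq (m : ℕ) (κ : Fin (m + 1) → ℝ) (i : Fin (m + 1)) (j : ℕ) :
    esymmF (m + 1) (j + 1) κ =
      esymmF m (j + 1) (κ ∘ i.succAbove) + κ i * esymmF m j (κ ∘ i.succAbove) := by
  have h : esymmGenPoly (m + 1) κ =
      esymmGenPoly m (κ ∘ i.succAbove) + C (κ i) * (esymmGenPoly m (κ ∘ i.succAbove) * X) := by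
    rw [esymmGenPoly, Fin.prod_univ_succAbove _ i]
    simp only [esymmGenPoly, Function.comp_apply]
    ring
  rw [← coeff_esymmGenPoly, ← coeff_esymmGenPoly, ← coeff_esymmGenPoly, h, coeff_add,
    coeff_C_mul, coeff_mul_X]

@[simp]
theorem esymmF_zero (m : ℕ) (κ : Fin m → ℝ) : esymmF m 0 κ = 1 := by
  simp [esymmF]

theorem le_of_esymmF_pos {m j : ℕ} {κ : Fin m → ℝ} (h : 0 < esymmF m j κ) : j ≤ m := by
  by_contra! hj
  rw [esymmF, Finset.powersetCard_eq_empty.mpr (by simpa using hj), Finset.sum_empty] at h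
  exact h.false

theorem esymmF_pos_of_forall_pos {m j : ℕ} {κ : Fin m → ℝ} (hκ : ∀ i, 0 < κ i) (hj : j ≤ m) :
    0 < esymmF m j κ :=
  Finset.sum_pos (fun s _ => Finset.prod_pos fun i _ => hκ i)
    (Finset.powersetCard_nonempty.mpr (by simpa using hj))

theorem continuous_esymmF (m j : ℕ) : Continuous (esymmF m j) := by
  unfold esymmF
  fun_prop

-- Including `l = 0` changes nothing, since `e_0 = 1`.
def gardingCone (m k : ℕ) : Set (Fin m → ℝ) :=
  {κ | ∀ l ≤ k, 0 < esymmF m l κ}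

theorem isOpen_gardingCone (m k : ℕ) : IsOpen (gardingCone m k) := by
  have : gardingCone m k = ⋂ l ∈ Set.Iic k, {κ | 0 < esymmF m l κ} := by
    ext; simp [gardingCone]
  rw [this]
  exact (Set.finite_Iic k).isOpen_biInter fun l _ =>
    isOpen_lt continuous_const (continuous_esymmF m l)

theorem closure_gardingCone_subset (m k : ℕ) :
    closure (gardingCone m k) ⊆ {κ | ∀ l ≤ k, 0 ≤ esymmF m l κ} := by
  refine closure_minimal (fun κ hκ l hl => (hκ l hl).le) ?_
  simp only [Set.ofPred_forall]
  exact isClosed_iInter fun l => isClosed_iInter fun _ =>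
    isClosed_le continuous_const (continuous_esymmF m l)

theorem mem_gardingCone_zero (m : ℕ) (κ : Fin m → ℝ) : κ ∈ gardingCone m 0 := by
  intro l hl
  simp [nonpos_iff_eq_zero.mp hl]

theorem mem_gardingCone_of_forall_pos {m k : ℕ} {κ : Fin m → ℝ} (hκ : ∀ i, 0 < κ i)
    (hk : 0 < esymmF m k κ) : κ ∈ gardingCone m k :=
  fun _ hl => esymmF_pos_of_forall_pos hκ (hl.trans (le_of_esymmF_pos hk))

theorem esymmF_succAbove_nonneg {m k : ℕ} {κ : Fin (m + 1) → ℝ} {i : Fin (m + 1)} (hi : κ i ≤ 0)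
    (hκ : ∀ l ≤ k, 0 ≤ esymmF (m + 1) l κ) : ∀ l ≤ k, 0 ≤ esymmF m l (κ ∘ i.succAbove) := by
  intro l hl
  induction l with
  | zero => simp
  | succ l ih =>
    have h := hκ (l + 1) hl
    rw [esymmF_succ_eq m κ i] at h
    linarith [mul_nonpos_of_nonpos_of_nonneg hi (ih (by omega))]

theorem mem_gardingCone_of_nonneg {m k : ℕ} {κ : Fin m → ℝ}
    (hκ : ∀ l ≤ k, 0 ≤ esymmF m l κ) (hk : 0 < esymmF m k κ) : κ ∈ gardingCone m k := by
  induction m generalizing k with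
  | zero => exact mem_gardingCone_of_forall_pos finZeroElim hk
  | succ m ih =>
    by_cases hall : ∀ i, 0 < κ i
    · exact mem_gardingCone_of_forall_pos hall hk
    push Not at hall
    obtain ⟨i, hi⟩ := hall
    obtain _ | n := k
    · exact mem_gardingCone_zero _ κ
    set w := κ ∘ i.succAbove
    have hw_nonneg := esymmF_succAbove_nonneg hi hκ
    rw [esymmF_succ_eq m κ i] at hk
    have hw_pos : 0 < esymmF m (n + 1) w := by
      linarith [mul_nonpos_of_nonpos_of_nonneg hi (hw_nonneg n n.le_succ)]
    have hw : w ∈ gardingCone m (n + 1) := ih hw_nonneg hw_pos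
    rintro (_ | j) hj
    · simp
    rw [esymmF_succ_eq m κ i]
    exact add_mul_pos_of_mul_le_sq hw (fun l _ => esymmF_mul_esymmF_le_sq m l w) hi hk
      (by omega)

theorem garding_cone_component_general (m k : ℕ) (κ : Fin m → ℝ)
    (hconn : κ ∈ connectedComponentIn {x : Fin m → ℝ | 0 < esymmF m k x} (fun _ => 1)) :
    ∀ l, 1 ≤ l → l ≤ k → 0 < esymmF m l κ := by
  set U := {x : Fin m → ℝ | 0 < esymmF m k x}
  have hone : (fun _ => 1) ∈ U := connectedComponentIn_nonempty_iff.mp ⟨κ, hconn⟩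
  have hone_cone : (fun _ => 1) ∈ gardingCone m k :=
    mem_gardingCone_of_forall_pos (fun _ => one_pos) hone
  have hsub : connectedComponentIn U (fun _ => 1) ⊆ gardingCone m k :=
    isPreconnected_connectedComponentIn.subset_of_closure_inter_subset (isOpen_gardingCone m k)
      ⟨_, mem_connectedComponentIn hone, hone_cone⟩ fun x ⟨hcl, hx⟩ =>
        mem_gardingCone_of_nonneg (closure_gardingCone_subset m k hcl)
          (connectedComponentIn_subset U _ hx)
  exact fun l _ hl => hsub hconn l hl

/-- If `κ` lies in the connected component of `{e_k > 0}` containing `(1,…,1)`,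
then `e_l(κ) > 0` for all `1 ≤ l ≤ k`, i.e. `κ` lies in the Garding cone `Γ_k⁺`. -/
theorem garding_cone_component (m k : ℕ) (hk1 : 1 ≤ k) (hk2 : k ≤ m) (κ : Fin m → ℝ)
    (hpos : 0 < esymmF m k κ)
    (hconn : κ ∈ connectedComponentIn {x : Fin m → ℝ | 0 < esymmF m k x} (fun _ => 1)) :
    ∀ l, 1 ≤ l → l ≤ k → 0 < esymmF m l κ :=
  garding_cone_component_general m k κ hconn
end

section
/- Let κ ∈ ℝ^m with e_j(κ) > 0 for all 1 ≤ j ≤ k (i.e., κ in the Garding cone Γ_k⁺). Then for any 0 ≤ l < k, the l-th Newton transformation T_l of the diagonal matrix with entries κ₁,…,κ_m is positive definite; equivalently, for each index j, the sum Λ_j = Σ κ_{i₁}⋯κ_{i_l} over all 1 ≤ i₁ < ⋯ < i_l ≤ m with j ∉ {i₁,…,i_l} is strictly positive. -/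
/-- The eigenvalue `Λ_j` of the `l`-th Newton transformation of `diag(κ)`:
the `l`-th elementary symmetric polynomial of the variables omitting `κ_j`. -/
def LambdaF (m : ℕ) (κ : Fin m → ℝ) (l : ℕ) (j : Fin m) : ℝ :=
  ∑ s ∈ Finset.powersetCard l (Finset.univ.erase j), ∏ i ∈ s, κ i

namespace NewtonAux

open Finset

variable {m : ℕ}

/-- Elementary symmetric sum of level `l` over a subset `T`. -/
noncomputable def E (κ : Fin m → ℝ) (l : ℕ) (T : Finset (Fin m)) : ℝ :=
  ∑ s ∈ T.powersetCard l, ∏ i ∈ s, κ i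

lemma E_zero (κ : Fin m → ℝ) (T : Finset (Fin m)) : E κ 0 T = 1 := by
  simp [E]

lemma E_eq_zero (κ : Fin m → ℝ) {l : ℕ} {T : Finset (Fin m)} (h : T.card < l) :
    E κ l T = 0 := by
  simp [E, Finset.powersetCard_eq_empty.2 h]

/-- Sum over `l+1`-subsets containing `j` equals sum over `l`-subsets of `T.erase j`. -/
lemma sum_mem_bij {T : Finset (Fin m)} {j : Fin m} (hj : j ∈ T) (l : ℕ)
    (F : Finset (Fin m) → ℝ) :
    ∑ s ∈ (T.powersetCard (l+1)).filter (fun s => j ∈ s), F s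
      = ∑ u ∈ (T.erase j).powersetCard l, F (insert j u) := by
  refine Finset.sum_nbij' (fun s => s.erase j) (fun u => insert j u) ?_ ?_ ?_ ?_ ?_
  · intro s hs
    simp only [mem_filter, mem_powersetCard] at hs
    obtain ⟨⟨hsT, hcard⟩, hjs⟩ := hs
    refine mem_powersetCard.2 ⟨?_, ?_⟩
    · intro x hx
      rcases mem_erase.1 hx with ⟨hxj, hxs⟩
      exact mem_erase.2 ⟨hxj, hsT hxs⟩
    · rw [card_erase_of_mem hjs, hcard]
      omega
  · intro u hu
    rcases mem_powersetCard.1 hu with ⟨huT, hcard⟩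
    have hju : j ∉ u := fun h => (mem_erase.1 (huT h)).1 rfl
    refine mem_filter.2 ⟨mem_powersetCard.2 ⟨?_, ?_⟩, mem_insert_self _ _⟩
    · intro x hx
      rcases mem_insert.1 hx with rfl | hxu
      · exact hj
      · exact (mem_erase.1 (huT hxu)).2
    · rw [card_insert_of_notMem hju, hcard]
  · intro s hs
    exact insert_erase (mem_filter.1 hs).2
  · intro u hu
    have huT := (mem_powersetCard.1 hu).1
    exact erase_insert (fun h => (mem_erase.1 (huT h)).1 rfl)
  · intro s hs
    rw [insert_erase (mem_filter.1 hs).2]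

/-- Recursion: split off the variable `j`. -/
lemma E_rec {T : Finset (Fin m)} {j : Fin m} (hj : j ∈ T) (κ : Fin m → ℝ) (l : ℕ) :
    E κ (l+1) T = E κ (l+1) (T.erase j) + κ j * E κ l (T.erase j) := by
  classical
  rw [E, ← Finset.sum_filter_add_sum_filter_not _ (fun s => j ∈ s), add_comm]
  congr 1
  · rw [E]
    refine Finset.sum_congr ?_ (fun _ _ => rfl)
    ext s
    simp only [mem_filter, mem_powersetCard, Finset.subset_erase]
    tauto
  · rw [sum_mem_bij hj l]
    rw [E, Finset.mul_sum]
    refine Finset.sum_congr rfl fun u hu => ?_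
    have huT := (mem_powersetCard.1 hu).1
    have hju : j ∉ u := fun h => (mem_erase.1 (huT h)).1 rfl
    rw [Finset.prod_insert hju]

/-- Identity: `∑_{i ∈ T} κ i * E_l(T \ i) = (l+1) E_{l+1}(T)`. -/
lemma sum_mul_E (κ : Fin m → ℝ) (l : ℕ) (T : Finset (Fin m)) :
    ∑ i ∈ T, κ i * E κ l (T.erase i) = ((l : ℝ) + 1) * E κ (l+1) T := by
  classical
  have h1 : ((l : ℝ) + 1) * E κ (l+1) T
      = ∑ s ∈ T.powersetCard (l+1), ∑ i ∈ s, κ i * ∏ x ∈ s.erase i, κ x := by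
    rw [E, Finset.mul_sum]
    refine Finset.sum_congr rfl fun s hs => ?_
    rcases mem_powersetCard.1 hs with ⟨hsT, hcard⟩
    have : ∀ i ∈ s, κ i * ∏ x ∈ s.erase i, κ x = ∏ x ∈ s, κ x := fun i hi =>
      Finset.mul_prod_erase s κ hi
    rw [Finset.sum_congr rfl this, Finset.sum_const, hcard, nsmul_eq_mul]
    push_cast
    ring
  have hcond : ∀ (s : Finset (Fin m)) (i : Fin m),
      s ∈ T.powersetCard (l+1) ∧ i ∈ s ↔
      s ∈ (T.powersetCard (l+1)).filter (fun s => i ∈ s) ∧ i ∈ T := by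
    intro s i
    simp only [mem_filter, mem_powersetCard]
    constructor
    · rintro ⟨⟨hsT, hc⟩, his⟩
      exact ⟨⟨⟨hsT, hc⟩, his⟩, hsT his⟩
    · rintro ⟨⟨hs, his⟩, _⟩
      exact ⟨hs, his⟩
  rw [h1, Finset.sum_comm' hcond]
  refine Finset.sum_congr rfl fun i hi => ?_
  rw [sum_mem_bij hi l, E, Finset.mul_sum]
  refine Finset.sum_congr rfl fun u hu => ?_
  have huT := (mem_powersetCard.1 hu).1
  have hiu : i ∉ u := fun h => (mem_erase.1 (huT h)).1 rfl
  rw [erase_insert hiu]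


/-- Number of `l`-subsets of `T` containing a given `u ⊆ T` with `#u ≤ l`. -/
lemma card_filter_superset {T u : Finset (Fin m)} (hu : u ⊆ T) {l : ℕ} (hul : u.card ≤ l) :
    ((T.powersetCard l).filter (fun s => u ⊆ s)).card
      = (T.card - u.card).choose (l - u.card) := by
  classical
  rw [← card_sdiff_of_subset hu, ← Finset.card_powersetCard (l - u.card) (T \ u)]
  refine Finset.card_nbij' (fun s => s \ u) (fun v => v ∪ u) ?_ ?_ ?_ ?_
  · intro s hs
    rcases mem_filter.1 hs with ⟨hs', hus⟩
    rcases mem_powersetCard.1 hs' with ⟨hsT, hcard⟩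
    refine mem_powersetCard.2 ⟨sdiff_subset_sdiff hsT (Finset.Subset.refl u), ?_⟩
    rw [card_sdiff_of_subset hus, hcard]
  · intro v hv
    rcases mem_powersetCard.1 hv with ⟨hvT, hcard⟩
    have hdisj : Disjoint v u := Finset.disjoint_of_subset_left hvT (Finset.sdiff_disjoint)
    refine mem_filter.2 ⟨mem_powersetCard.2 ⟨?_, ?_⟩, Finset.subset_union_right⟩
    · exact Finset.union_subset (hvT.trans (Finset.sdiff_subset)) hu
    · rw [Finset.card_union_of_disjoint hdisj, hcard]
      omega
  · intro s hs
    exact Finset.sdiff_union_of_subset (mem_filter.1 hs).2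
  · intro v hv
    have hvT := (mem_powersetCard.1 hv).1
    exact Finset.union_sdiff_cancel_right
      (Finset.disjoint_of_subset_left hvT (Finset.sdiff_disjoint))

/-- Shift formula: the symmetric sums of `κ + t` in terms of those of `κ`. -/
lemma E_shift_raw (κ : Fin m → ℝ) (t : ℝ) {l : ℕ} {T : Finset (Fin m)} (hlT : l ≤ T.card) :
    (∑ s ∈ T.powersetCard l, ∏ i ∈ s, (κ i + t))
      = ∑ i ∈ Finset.range (l+1),
          ((T.card - i).choose (l - i) : ℝ) * (∑ u ∈ T.powersetCard i, ∏ x ∈ u, κ x) * t^(l-i) := by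
  classical
  have step1 : ∀ s ∈ T.powersetCard l,
      (∏ i ∈ s, (κ i + t)) = ∑ u ∈ s.powerset, (∏ x ∈ u, κ x) * t^(l - u.card) := by
    intro s hs
    rcases mem_powersetCard.1 hs with ⟨hsT, hcard⟩
    rw [Finset.prod_add]
    refine Finset.sum_congr rfl fun u hu => ?_
    have hus := mem_powerset.1 hu
    rw [Finset.prod_const, card_sdiff_of_subset hus, hcard]
  rw [Finset.sum_congr rfl step1]
  have hcond : ∀ (s u : Finset (Fin m)),
      s ∈ T.powersetCard l ∧ u ∈ s.powerset ↔
      s ∈ (T.powersetCard l).filter (fun s => u ⊆ s) ∧ u ∈ T.powerset := by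
    intro s u
    simp only [mem_filter, mem_powerset]
    constructor
    · rintro ⟨hs, hus⟩
      exact ⟨⟨hs, hus⟩, hus.trans (mem_powersetCard.1 hs).1⟩
    · rintro ⟨⟨hs, hus⟩, _⟩
      exact ⟨hs, hus⟩
  rw [Finset.sum_comm' hcond]
  rw [Finset.sum_powerset]
  have hrange : Finset.range (l+1) ⊆ Finset.range (T.card + 1) := by
    apply Finset.range_subset_range.2; omega
  rw [← Finset.sum_subset hrange ?van]
  case van =>
    intro i _ hil
    have hli : l < i := by simp only [Finset.mem_range] at hil ⊢; omega
    refine Finset.sum_eq_zero fun u hu => ?_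
    have hucard : u.card = i := (mem_powersetCard.1 hu).2
    have : (T.powersetCard l).filter (fun s => u ⊆ s) = ∅ := by
      refine Finset.filter_eq_empty_iff.2 fun s hs hus => ?_
      have := Finset.card_le_card hus
      rw [hucard, (mem_powersetCard.1 hs).2] at this
      omega
    rw [this]
    simp
  refine Finset.sum_congr rfl fun i hi => ?_
  have hil : i ≤ l := by simpa using Nat.lt_succ_iff.1 (Finset.mem_range.1 hi)
  rw [Finset.mul_sum, Finset.sum_mul]
  refine Finset.sum_congr rfl fun u hu => ?_
  rcases mem_powersetCard.1 hu with ⟨huT, hucard⟩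
  rw [Finset.sum_const, card_filter_superset huT (hucard ▸ hil), hucard, nsmul_eq_mul]
  ring



/-- Shift formula in terms of `E`. -/
lemma E_shift (κ : Fin m → ℝ) (t : ℝ) {l : ℕ} {T : Finset (Fin m)} (hlT : l ≤ T.card) :
    E (fun i => κ i + t) l T
      = ∑ i ∈ Finset.range (l+1),
          ((T.card - i).choose (l - i) : ℝ) * E κ i T * t^(l-i) :=
  E_shift_raw κ t hlT



lemma E_continuous (κ : Fin m → ℝ) (l : ℕ) (T : Finset (Fin m)) :
    Continuous fun t : ℝ => E (fun i => κ i + t) l T := by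
  simp only [E]
  exact continuous_finset_sum _ fun s _ =>
    continuous_finset_prod _ fun i _ => continuous_const.add continuous_id

lemma E_shift_pos (κ : Fin m → ℝ) {l : ℕ} {T : Finset (Fin m)} (hlT : l ≤ T.card)
    {t : ℝ} (ht : 0 ≤ t) (hnn : ∀ i, i ≤ l → 0 ≤ E κ i T)
    (hw : 0 < E κ l T ∨ 0 < t) :
    0 < E (fun i => κ i + t) l T := by
  rw [E_shift κ t hlT]
  have hterm : ∀ i ∈ Finset.range (l+1),
      0 ≤ ((T.card - i).choose (l - i) : ℝ) * E κ i T * t^(l-i) := by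
    intro i hi
    have hil : i ≤ l := Nat.lt_succ_iff.1 (Finset.mem_range.1 hi)
    exact mul_nonneg (mul_nonneg (Nat.cast_nonneg _) (hnn i hil)) (pow_nonneg ht _)
  rcases hw with hE | htpos
  · refine Finset.sum_pos' hterm ⟨l, Finset.self_mem_range_succ l, ?_⟩
    simpa [Nat.sub_self] using hE
  · refine Finset.sum_pos' hterm ⟨0, Finset.mem_range.2 (Nat.succ_pos l), ?_⟩
    simp only [Nat.sub_zero, E_zero, mul_one]
    have h1 : 0 < (T.card.choose l : ℝ) := by
      exact_mod_cast Nat.choose_pos hlT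
    have h2 : 0 < t^l := pow_pos htpos l
    nlinarith

lemma poly_eventually_pos (n : ℕ) (a : ℕ → ℝ) (h0 : 1 ≤ a 0) :
    ∃ B : ℝ, 0 ≤ B ∧ ∀ t : ℝ, B < t → 0 < ∑ i ∈ Finset.range (n+1), a i * t^(n-i) := by
  set M := ∑ i ∈ Finset.range (n+1), |a i| with hM
  have hMabs : |a 0| ≤ M :=
    Finset.single_le_sum (f := fun i => |a i|) (fun i _ => abs_nonneg _)
      (Finset.mem_range.2 (Nat.succ_pos n))
  have hM1 : 1 ≤ M := le_trans (le_trans h0 (le_abs_self _)) hMabs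
  refine ⟨M + 1, by linarith, fun t ht => ?_⟩
  have ht1 : 1 ≤ t := by linarith
  have ht0 : 0 < t := by linarith
  rcases Nat.eq_zero_or_pos n with rfl | hn
  · simpa using by linarith [h0]
  obtain ⟨n₀, rfl⟩ : ∃ n₀, n = n₀ + 1 := ⟨n - 1, by omega⟩
  rw [Finset.sum_range_succ']
  have hpow : (0:ℝ) < t ^ n₀ := pow_pos ht0 n₀
  have hb : ∀ i ∈ Finset.range (n₀+1), -(|a (i+1)| * t^n₀) ≤ a (i+1) * t^(n₀+1-(i+1)) := by
    intro i _
    have h1 : t^(n₀+1-(i+1)) ≤ t^n₀ := pow_le_pow_right₀ ht1 (by omega)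
    have h1' : (0:ℝ) ≤ t^(n₀+1-(i+1)) := pow_nonneg ht0.le _
    rcases le_or_gt 0 (a (i+1)) with hpos | hneg
    · have := mul_nonneg hpos h1'
      nlinarith [mul_nonneg (abs_nonneg (a (i+1))) hpow.le]
    · have habs : |a (i+1)| = -(a (i+1)) := abs_of_neg hneg
      have := mul_le_mul_of_nonpos_left h1 hneg.le
      rw [habs]; nlinarith
  have hsum := Finset.sum_le_sum hb
  have hMsplit : M = (∑ i ∈ Finset.range (n₀+1), |a (i+1)|) + |a 0| := by
    rw [hM, Finset.sum_range_succ' (fun i => |a i|) (n₀+1)]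
  have hneg : ∑ i ∈ Finset.range (n₀+1), -(|a (i+1)| * t^n₀)
      = -((∑ i ∈ Finset.range (n₀+1), |a (i+1)|) * t^n₀) := by
    rw [Finset.sum_mul, Finset.sum_neg_distrib]
  rw [hneg] at hsum
  have habs0 : 0 ≤ |a 0| := abs_nonneg _
  have hsum' : -(M * t^n₀)
      ≤ ∑ i ∈ Finset.range (n₀+1), a (i+1) * t^(n₀+1-(i+1)) := by
    refine le_trans ?_ hsum
    rw [hMsplit]
    nlinarith [mul_nonneg habs0 hpow.le]
  have h3 : t^(n₀+1) ≤ a 0 * t^(n₀+1) := by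
    nlinarith [pow_nonneg ht0.le (n₀+1)]
  have hps : t^(n₀+1) = t^n₀ * t := pow_succ t n₀
  simp only [Nat.sub_zero]
  nlinarith [hsum', h3, hpow, ht]











theorem main (k : ℕ) : ∀ (κ : Fin m → ℝ) (S : Finset (Fin m)),
    (∀ j, 1 ≤ j → j ≤ k → 0 < E κ j S) →
    ∀ l, l < k → ∀ j ∈ S, 0 < E κ l (S.erase j) := by
  induction k using Nat.strong_induction_on with
  | _ k IH =>
  intro κ S hΓ l hl j hj
  rcases Nat.eq_zero_or_pos l with rfl | hl1
  · rw [E_zero]; norm_num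
  by_cases hlk : l < k - 1
  · exact IH (k-1) (by omega) κ S (fun jj h1 h2 => hΓ jj h1 (by omega)) l (by omega) j hj
  -- now l = k - 1 and k ≥ 2
  obtain ⟨p, rfl⟩ : ∃ p, k = p + 2 := ⟨k - 2, by omega⟩
  have hlp : l = p + 1 := by omega
  subst hlp
  have hkcard : p + 2 ≤ S.card := by
    by_contra hcon
    have h := hΓ (p+2) (by omega) le_rfl
    rw [E_eq_zero κ (by omega)] at h
    exact lt_irrefl 0 h
  set S' := S.erase j with hS'
  have hS'card : S'.card = S.card - 1 := card_erase_of_mem hj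
  have hpS' : p + 1 ≤ S'.card := by omega
  by_contra hgoal
  push_neg at hgoal
  -- positivity along the ray κ + t·𝟙
  have hray : ∀ t : ℝ, 0 ≤ t → ∀ jj, 1 ≤ jj → jj ≤ p + 2 →
      0 < E (fun i => κ i + t) jj S := by
    intro t ht jj h1 h2
    refine E_shift_pos κ (by omega) ht ?_ (Or.inl (hΓ jj h1 h2))
    intro i hi
    rcases Nat.eq_zero_or_pos i with rfl | hi1
    · rw [E_zero]; norm_num
    · exact (hΓ i hi1 (by omega)).le
  set f : ℝ → ℝ := fun t => E (fun i => κ i + t) (p+1) S' with hf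
  -- eventual positivity of f
  have hfB : ∃ B : ℝ, 0 ≤ B ∧ ∀ t, B < t → 0 < f t := by
    obtain ⟨B, hB0, hB⟩ := poly_eventually_pos (p+1)
      (fun i => ((S'.card - i).choose (p+1-i) : ℝ) * E κ i S')
      (by simp only [Nat.sub_zero, E_zero, mul_one]
          exact_mod_cast Nat.choose_pos hpS')
    refine ⟨B, hB0, fun t ht => ?_⟩
    have h := hB t ht
    show 0 < E (fun i => κ i + t) (p+1) S'
    rw [E_shift κ t hpS']
    exact h
  obtain ⟨B, hB0, hB⟩ := hfB
  have hf0 : f 0 ≤ 0 := by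
    have hfun : (fun i => κ i + (0:ℝ)) = κ := by funext i; ring
    show E (fun i => κ i + (0:ℝ)) (p+1) S' ≤ 0
    rw [hfun]
    exact hgoal
  set A : Set ℝ := {t | 0 ≤ t ∧ f t ≤ 0} with hA
  have hAne : A.Nonempty := ⟨0, le_rfl, hf0⟩
  have hAbdd : BddAbove A := by
    refine ⟨B, fun t ht => ?_⟩
    by_contra hcon
    push_neg at hcon
    exact absurd ht.2 (not_le.2 (hB t hcon))
  have hAclosed : IsClosed A := by
    have : A = Set.Ici 0 ∩ f ⁻¹' Set.Iic 0 := by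
      ext t; simp [hA, Set.mem_Ici, Set.mem_Iic, and_comm]
    rw [this]
    exact isClosed_Ici.inter (isClosed_Iic.preimage (E_continuous κ (p+1) S'))
  have ht₀A : sSup A ∈ A := hAclosed.csSup_mem hAne hAbdd
  set t₀ := sSup A with ht₀
  have ht₀0 : 0 ≤ t₀ := ht₀A.1
  have hft₀ : f t₀ ≤ 0 := ht₀A.2
  have hgt : ∀ t, t₀ < t → 0 < f t := by
    intro t ht
    by_contra hcon
    push_neg at hcon
    have htA : t ∈ A := ⟨le_trans ht₀0 ht.le, hcon⟩
    exact absurd (le_csSup hAbdd htA) (not_le.2 ht)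
  have hft₀' : 0 ≤ f t₀ := by
    have htend : Filter.Tendsto f (nhdsWithin t₀ (Set.Ioi t₀)) (nhds (f t₀)) :=
      ((E_continuous κ (p+1) S').continuousAt).continuousWithinAt
    refine ge_of_tendsto htend ?_
    filter_upwards [self_mem_nhdsWithin] with t ht using (hgt t ht).le
  have hft0 : f t₀ = 0 := le_antisymm hft₀ hft₀'
  set κ' : Fin m → ℝ := fun i => κ i + t₀ with hκ'
  have hΓ' : ∀ jj, 1 ≤ jj → jj ≤ p+2 → 0 < E κ' jj S :=
    fun jj h1 h2 => hray t₀ ht₀0 jj h1 h2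
  have h1 : E κ' (p+1) S' = 0 := hft0
  have h2 : 0 < E κ' (p+2) S := hΓ' (p+2) (by omega) le_rfl
  have h3 : 0 < E κ' (p+2) S' := by
    have hr := E_rec hj κ' (p+1)
    rw [← hS', h1, mul_zero, add_zero] at hr
    rw [← hr]
    exact h2
  have hIH1 : ∀ l', l' < p+1 → ∀ i ∈ S, 0 < E κ' l' (S.erase i) :=
    IH (p+1) (by omega) κ' S (fun jj a b => hΓ' jj a (by omega))
  have hS'nn : ∀ i, i ≤ p+1 → 0 ≤ E κ' i S' := by
    intro i hi
    rcases Nat.lt_or_ge i (p+1) with hlt | hge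
    · rcases Nat.eq_zero_or_pos i with rfl | hi1
      · rw [E_zero]; norm_num
      · exact (hS' ▸ hIH1 i hlt j hj).le
    · have : i = p + 1 := by omega
      subst this
      exact le_of_eq h1.symm
  have h5 : ∀ i ∈ S', 0 ≤ E κ' p (S'.erase i) := by
    intro i hi
    have hpos : ∀ ε : ℝ, 0 < ε → 0 < E (fun x => κ' x + ε) p (S'.erase i) := by
      intro ε hε
      have hΓε : ∀ jj, 1 ≤ jj → jj ≤ p+1 → 0 < E (fun x => κ' x + ε) jj S' := by
        intro jj hj1 hj2
        refine E_shift_pos κ' (by omega) hε.le ?_ (Or.inr hε)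
        intro i' hi'
        rcases Nat.eq_zero_or_pos i' with rfl | hpos'
        · rw [E_zero]; norm_num
        · exact hS'nn i' (by omega)
      exact IH (p+1) (by omega) (fun x => κ' x + ε) S' hΓε p (by omega) i hi
    have htend : Filter.Tendsto (fun ε => E (fun x => κ' x + ε) p (S'.erase i))
        (nhdsWithin 0 (Set.Ioi 0)) (nhds (E (fun x => κ' x + (0:ℝ)) p (S'.erase i))) :=
      ((E_continuous κ' p (S'.erase i)).continuousAt).continuousWithinAt
    have hge : 0 ≤ E (fun x => κ' x + (0:ℝ)) p (S'.erase i) := by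
      refine ge_of_tendsto htend ?_
      filter_upwards [self_mem_nhdsWithin] with ε hε using (hpos ε hε).le
    have hfun : (fun x => κ' x + (0:ℝ)) = κ' := by funext x; ring
    rwa [hfun] at hge
  have h6 : ∑ i ∈ S', κ' i * E κ' (p+1) (S'.erase i)
      = (((p+1 : ℕ) : ℝ) + 1) * E κ' (p+2) S' := sum_mul_E κ' (p+1) S'
  have h7 : ∀ i ∈ S', κ' i * E κ' (p+1) (S'.erase i)
      = -((κ' i)^2 * E κ' p (S'.erase i)) := by
    intro i hi
    have hr := E_rec hi κ' p
    rw [h1] at hr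
    have hr' : E κ' (p+1) (S'.erase i) = -(κ' i * E κ' p (S'.erase i)) := by linarith
    rw [hr']; ring
  have h8 : ∑ i ∈ S', κ' i * E κ' (p+1) (S'.erase i) ≤ 0 := by
    rw [Finset.sum_congr rfl h7]
    exact Finset.sum_nonpos fun i hi =>
      neg_nonpos.2 (mul_nonneg (sq_nonneg _) (h5 i hi))
  rw [h6] at h8
  have hcast : (0:ℝ) < ((p+1 : ℕ) : ℝ) + 1 := by positivity
  nlinarith [h3]



end NewtonAux

/-- If `κ` lies in the Garding cone `Γ_k⁺` (all `e_j(κ) > 0` for `1 ≤ j ≤ k`), then for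
`0 ≤ l < k` every eigenvalue `Λ_j` of the `l`-th Newton transformation of `diag(κ)` is
strictly positive, i.e. `T_l` is positive definite. -/
theorem newton_transformation_positive (m k : ℕ) (hk1 : 1 ≤ k) (hk2 : k ≤ m)
    (κ : Fin m → ℝ) (hΓ : ∀ j, 1 ≤ j → j ≤ k → 0 < esymmF m j κ)
    (l : ℕ) (hl : l < k) :
    ∀ j : Fin m, 0 < LambdaF m κ l j := by
  intro j
  exact NewtonAux.main k κ Finset.univ (fun jj h1 h2 => hΓ jj h1 h2) l hl j (Finset.mem_univ j)
end
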